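/- arXiv:2112.09364 — 2 statements merged into one kernel-verified Lean document; each statement's English description precedes it below -/
import Mathlib

section
/- Let σ ∈ (0,2], let k be a kernel of order σ, and let Ω ⊆ ℝ^N be open. If u ∈ 𝒱^k_loc(Ω) and φ ∈ C_c^∞(Ω), then the function (x,y) ↦ (u(x)−u(y))(φ(x)−φ(y)) k(x,y) is absolutely integrable over ℝ^N × ℝ^N; in particular b_k(u,φ) := (1/2)∫∫ (u(x)−u(y))(φ(x)−φ(y)) k(x,y) dx dy is well-defined and finite. -/
/-!
Choose an open `U` with `tsupport φ ⊆ U ⋐ Ω` and `δ > 0` such that the `δ`-neighbourhood of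
`tsupport φ` lies in `U`. On `U × U` the integrand is dominated by
`((u x - u y)² + (φ x - φ y)²) k x y`: the `u`-part is integrable since `u ∈ D^k(U)`, the `φ`-part
since `|φ x - φ y|² ≲ min 1 ‖x - y‖² ≤ min 1 (‖x - y‖ ^ σ)` for `σ ≤ 2`. Off `U × U` the
integrand vanishes unless one point lies in `tsupport φ` and the other outside `U`, hence at
distance `≥ δ`; there it is dominated by `2 ‖φ‖_∞ (|u x| + |u y|) k x y`, which is integrable
because `u ∈ L¹(U)`, by the tail bound on `u`, and because
`∫_{‖x - y‖ ≥ δ} k x y dy ≤ C / min 1 (δ ^ σ)`. Symmetry of `k` swaps the two off-diagonal pieces.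
-/

open MeasureTheory ENNReal Metric Set Filter

noncomputable section

abbrev Euc (N : ℕ) := EuclideanSpace ℝ (Fin N)

/-- A kernel of order `σ`. -/
def IsKernel (N : ℕ) (σ : ℝ) (k : Euc N → Euc N → ℝ) : Prop :=
  Measurable (fun p : Euc N × Euc N => k p.1 p.2) ∧
  (∀ x y, 0 ≤ k x y) ∧ (∀ x y, k x y = k y x) ∧
  ∃ C : ℝ, ∀ x, (∫⁻ y, ENNReal.ofReal (min 1 (‖x - y‖ ^ σ) * k x y)) ≤ ENNReal.ofReal C

/-- The quadratic form `b_{k,Ω}(u)` (valued in `[0,∞]`). -/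
def quadForm {N : ℕ} (k : Euc N → Euc N → ℝ) (Ω : Set (Euc N)) (u : Euc N → ℝ) : ℝ≥0∞ :=
  (1 / 2) * ∫⁻ x in Ω, ∫⁻ y in Ω, ENNReal.ofReal ((u x - u y) ^ 2 * k x y)

/-- The bilinear form `b_{k,Ω}(u,v)`. -/
def bForm {N : ℕ} (k : Euc N → Euc N → ℝ) (Ω : Set (Euc N)) (u v : Euc N → ℝ) : ℝ :=
  (1 / 2) * ∫ x in Ω, ∫ y in Ω, (u x - u y) * (v x - v y) * k x y

/-- The symmetric lower bound `j` of the kernel `k`. -/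
def symLB {N : ℕ} (k : Euc N → Euc N → ℝ) (z : Euc N) : ℝ :=
  essInf (fun x => min (k x (x + z)) (k x (x - z))) volume

/-- `u|_Ω ∈ D^k(Ω)`. -/
def MemDk {N : ℕ} (k : Euc N → Euc N → ℝ) (Ω : Set (Euc N)) (u : Euc N → ℝ) : Prop :=
  Measurable u ∧ MemLp u 2 (volume.restrict Ω) ∧ quadForm k Ω u < ⊤

/-- `u ∈ 𝒱^k(Ω)`. -/
def MemVk {N : ℕ} (k : Euc N → Euc N → ℝ) (Ω : Set (Euc N)) (u : Euc N → ℝ) : Prop :=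
  MemDk k Ω u ∧
  ∀ r > (0:ℝ), ∃ C : ℝ, ∀ x, (∫⁻ y in (Metric.ball x r)ᶜ, ENNReal.ofReal (|u y| * k x y)) ≤ ENNReal.ofReal C

/-- `u ∈ 𝒱^k_loc(Ω)`. -/
def MemVkLoc {N : ℕ} (k : Euc N → Euc N → ℝ) (Ω : Set (Euc N)) (u : Euc N → ℝ) : Prop :=
  Measurable u ∧
  (∀ Ω' : Set (Euc N), IsOpen Ω' → IsCompact (closure Ω') → closure Ω' ⊆ Ω → MemDk k Ω' u) ∧
  ∀ r > (0:ℝ), ∃ C : ℝ, ∀ x, (∫⁻ y in (Metric.ball x r)ᶜ, ENNReal.ofReal (|u y| * k x y)) ≤ ENNReal.ofReal C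

/-- `u ∈ 𝒟^k(Ω)`. -/
def MemDkZero {N : ℕ} (k : Euc N → Euc N → ℝ) (Ω : Set (Euc N)) (u : Euc N → ℝ) : Prop :=
  Measurable u ∧ MemLp u 2 volume ∧ quadForm k Set.univ u < ⊤ ∧ ∀ᵐ x ∂(volume : Measure (Euc N)), x ∉ Ω → u x = 0

/-- `φ ∈ C_c^∞(Ω)`. -/
def IsTestFun {N : ℕ} (Ω : Set (Euc N)) (φ : Euc N → ℝ) : Prop :=
  ContDiff ℝ (⊤ : ℕ∞) φ ∧ HasCompactSupport φ ∧ tsupport φ ⊆ Ω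

/-- `c ∈ L^∞_loc(Ω)`. -/
def MemLinftyLoc {N : ℕ} (Ω : Set (Euc N)) (c : Euc N → ℝ) : Prop :=
  ∀ K ⊆ Ω, IsCompact K → ∃ M : ℝ, ∀ᵐ x ∂(volume.restrict K), |c x| ≤ M

/-- `κ_{k,Ω}(x)`. -/
def kappa {N : ℕ} (k : Euc N → Euc N → ℝ) (Ω : Set (Euc N)) (x : Euc N) : ℝ≥0∞ :=
  ∫⁻ y in Ωᶜ, ENNReal.ofReal (k x y)

/-- `Ω` has Lipschitz boundary. -/
def HasLipschitzBoundary (N : ℕ) (Ω : Set (Euc N)) : Prop :=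
  ∀ p ∈ frontier Ω, ∃ U ∈ nhds p, ∃ e : Euc N ≃ᵢ Euc N, ∃ γ : Euc N → ℝ, ∃ L : NNReal,
    LipschitzWith L γ ∧
    (∀ x y : Euc N, (∀ i : Fin N, (i : ℕ) + 1 < N → x i = y i) → γ x = γ y) ∧
    Ω ∩ U = {x ∈ U | ∀ i : Fin N, (i : ℕ) + 1 = N → γ (e x) < e x i}

lemma min_one_sq_le_min_one_rpow {σ t : ℝ} (hσ0 : 0 < σ) (hσ2 : σ ≤ 2) (ht : 0 ≤ t) :
    min 1 t ^ 2 ≤ min 1 (t ^ σ) := by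
  rcases le_or_gt t 1 with h | h
  · rw [min_eq_right h, min_eq_right (Real.rpow_le_one ht h hσ0.le), ← Real.rpow_two]
    exact Real.rpow_le_rpow_of_exponent_ge' ht h hσ0.le hσ2
  · rw [min_eq_left h.le, min_eq_left (Real.one_le_rpow h.le hσ0.le), one_pow]

lemma LipschitzWith.abs_sub_le_mul_min_one_dist {α : Type*} [PseudoMetricSpace α]
    {φ : α → ℝ} {L : NNReal} {M : ℝ} (hφ : LipschitzWith L φ) (hM : ∀ x, |φ x| ≤ M) (x y : α) :
    |φ x - φ y| ≤ max (L : ℝ) (2 * M) * min 1 (dist x y) := by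
  rcases le_total (dist x y) 1 with h | h
  · rw [min_eq_right h, ← Real.dist_eq]
    exact (hφ.dist_le_mul x y).trans (by gcongr; exact le_max_left _ _)
  · rw [min_eq_left h, mul_one]
    calc |φ x - φ y| ≤ |φ x| + |φ y| := abs_sub _ _
      _ ≤ 2 * M := by linarith [hM x, hM y]
      _ ≤ _ := le_max_right _ _

lemma HasCompactSupport.exists_abs_sub_le_mul_min_one_norm {E : Type*} [NormedAddCommGroup E]
    [NormedSpace ℝ E] {φ : E → ℝ} (hc : HasCompactSupport φ) (hφ : ContDiff ℝ 1 φ) :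
    ∃ L, ∀ x y, |φ x - φ y| ≤ L * min 1 ‖x - y‖ := by
  obtain ⟨M, hM⟩ := hc.exists_bound_of_continuous hφ.continuous
  obtain ⟨L, hL⟩ := hφ.lipschitzWith_of_hasCompactSupport hc one_ne_zero
  refine ⟨max (L : ℝ) (2 * M), fun x y => ?_⟩
  rw [← dist_eq_norm]
  exact hL.abs_sub_le_mul_min_one_dist hM x y

section Kernel

variable {E : Type*} [NormedAddCommGroup E] [MeasurableSpace E] {μ : Measure E}
  {σ C : ℝ} {k : E → E → ℝ}

lemma lintegral_sq_sub_mul_kernel_le {φ : E → ℝ} {L : ℝ} (hσ0 : 0 < σ) (hσ2 : σ ≤ 2)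
    (hk0 : ∀ x y, 0 ≤ k x y)
    (hkC : ∀ x, ∫⁻ y, ENNReal.ofReal (min 1 (‖x - y‖ ^ σ) * k x y) ∂μ ≤ ENNReal.ofReal C)
    (hφ : ∀ x y, |φ x - φ y| ≤ L * min 1 ‖x - y‖) (x : E) :
    ∫⁻ y, ENNReal.ofReal ((φ x - φ y) ^ 2 * k x y) ∂μ ≤ ENNReal.ofReal (L ^ 2 * C) := by
  have hpt : ∀ y, (φ x - φ y) ^ 2 * k x y ≤ L ^ 2 * (min 1 (‖x - y‖ ^ σ) * k x y) := fun y => by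
    have hsq : (φ x - φ y) ^ 2 ≤ L ^ 2 * min 1 (‖x - y‖ ^ σ) := calc
      (φ x - φ y) ^ 2 = |φ x - φ y| ^ 2 := (sq_abs _).symm
      _ ≤ (L * min 1 ‖x - y‖) ^ 2 := by gcongr; exact hφ x y
      _ = L ^ 2 * min 1 ‖x - y‖ ^ 2 := mul_pow _ _ _
      _ ≤ L ^ 2 * min 1 (‖x - y‖ ^ σ) := by
        gcongr; exact min_one_sq_le_min_one_rpow hσ0 hσ2 (norm_nonneg _)
    rw [← mul_assoc]
    exact mul_le_mul_of_nonneg_right hsq (hk0 x y)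
  calc ∫⁻ y, ENNReal.ofReal ((φ x - φ y) ^ 2 * k x y) ∂μ
      ≤ ∫⁻ y, ENNReal.ofReal (L ^ 2) * ENNReal.ofReal (min 1 (‖x - y‖ ^ σ) * k x y) ∂μ :=
        lintegral_mono fun y => by
          rw [← ENNReal.ofReal_mul (sq_nonneg L)]; exact ENNReal.ofReal_le_ofReal (hpt y)
    _ = ENNReal.ofReal (L ^ 2) * ∫⁻ y, ENNReal.ofReal (min 1 (‖x - y‖ ^ σ) * k x y) ∂μ :=
        lintegral_const_mul' _ _ ENNReal.ofReal_ne_top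
    _ ≤ ENNReal.ofReal (L ^ 2 * C) := by
        rw [ENNReal.ofReal_mul (sq_nonneg L)]; gcongr; exact hkC x

lemma setLIntegral_compl_ball_kernel_le [OpensMeasurableSpace E] {δ : ℝ} (hσ0 : 0 < σ)
    (hδ : 0 < δ) (hk0 : ∀ x y, 0 ≤ k x y)
    (hkC : ∀ x, ∫⁻ y, ENNReal.ofReal (min 1 (‖x - y‖ ^ σ) * k x y) ∂μ ≤ ENNReal.ofReal C)
    (x : E) :
    ∫⁻ y in (ball x δ)ᶜ, ENNReal.ofReal (k x y) ∂μ ≤ ENNReal.ofReal (C / min 1 (δ ^ σ)) := by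
  set m := min 1 (δ ^ σ)
  have hm : 0 < m := lt_min one_pos (Real.rpow_pos_of_pos hδ σ)
  have hpt : ∀ y ∈ (ball x δ)ᶜ, k x y ≤ m⁻¹ * (min 1 (‖x - y‖ ^ σ) * k x y) := fun y hy => by
    have hδy : δ ≤ ‖x - y‖ := by
      rw [← dist_eq_norm, dist_comm]; simpa using hy
    have : m ≤ min 1 (‖x - y‖ ^ σ) := min_le_min le_rfl (Real.rpow_le_rpow hδ.le hδy hσ0.le)
    rw [le_inv_mul_iff₀ hm]
    exact mul_le_mul_of_nonneg_right this (hk0 x y)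
  calc ∫⁻ y in (ball x δ)ᶜ, ENNReal.ofReal (k x y) ∂μ
      ≤ ∫⁻ y in (ball x δ)ᶜ, ENNReal.ofReal m⁻¹ *
          ENNReal.ofReal (min 1 (‖x - y‖ ^ σ) * k x y) ∂μ :=
        setLIntegral_mono' measurableSet_ball.compl fun y hy => by
          rw [← ENNReal.ofReal_mul (inv_nonneg.2 hm.le)]
          exact ENNReal.ofReal_le_ofReal (hpt y hy)
    _ ≤ ENNReal.ofReal m⁻¹ * ∫⁻ y, ENNReal.ofReal (min 1 (‖x - y‖ ^ σ) * k x y) ∂μ := by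
        rw [lintegral_const_mul' _ _ ENNReal.ofReal_ne_top]
        exact mul_le_mul_right (setLIntegral_le_lintegral _ _) _
    _ ≤ ENNReal.ofReal (C / m) := by
        rw [div_eq_inv_mul, ENNReal.ofReal_mul (inv_nonneg.2 hm.le)]; gcongr; exact hkC x

lemma setLIntegral_setLIntegral_sq_sub_mul_kernel_lt_top {φ : E → ℝ} {L : ℝ} {U : Set E}
    (hσ0 : 0 < σ) (hσ2 : σ ≤ 2) (hk0 : ∀ x y, 0 ≤ k x y)
    (hkC : ∀ x, ∫⁻ y, ENNReal.ofReal (min 1 (‖x - y‖ ^ σ) * k x y) ∂μ ≤ ENNReal.ofReal C)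
    (hφ : ∀ x y, |φ x - φ y| ≤ L * min 1 ‖x - y‖) (hU : μ U < ∞) :
    ∫⁻ x in U, ∫⁻ y in U, ENNReal.ofReal ((φ x - φ y) ^ 2 * k x y) ∂μ ∂μ < ∞ := calc
  _ ≤ ∫⁻ _ in U, ENNReal.ofReal (L ^ 2 * C) ∂μ := lintegral_mono fun x =>
      (setLIntegral_le_lintegral _ _).trans (lintegral_sq_sub_mul_kernel_le hσ0 hσ2 hk0 hkC hφ x)
  _ = ENNReal.ofReal (L ^ 2 * C) * μ U := setLIntegral_const _ _
  _ < ∞ := ENNReal.mul_lt_top ENNReal.ofReal_lt_top hU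

end Kernel

section Prod

variable {α β : Type*} [MeasurableSpace α] [MeasurableSpace β] {μ : Measure α} {ν : Measure β}
  [SFinite μ] [SFinite ν]

lemma integrableOn_prod_of_setLIntegral_le {F : α × β → ℝ} {g : α → ℝ≥0∞} {s : Set α}
    {t : Set β} (hF : Measurable F) (hF0 : ∀ p, 0 ≤ F p) (hs : MeasurableSet s)
    (hFg : ∀ x ∈ s, ∫⁻ y in t, ENNReal.ofReal (F (x, y)) ∂ν ≤ g x)
    (hg : ∫⁻ x in s, g x ∂μ < ∞) :
    IntegrableOn F (s ×ˢ t) (μ.prod ν) := by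
  refine ⟨hF.aestronglyMeasurable, ?_⟩
  rw [hasFiniteIntegral_iff_ofReal (Eventually.of_forall hF0),
    setLIntegral_prod _ hF.ennreal_ofReal.aemeasurable]
  exact (setLIntegral_mono' hs hFg).trans_lt hg

lemma integrable_prod_of_integrableOn_of_symm {F : α × α → ℝ} {U K : Set α}
    (hsymm : ∀ x y, F (y, x) = F (x, y)) (hKU : K ⊆ U)
    (hF0 : ∀ x y, x ∉ K → y ∉ K → F (x, y) = 0)
    (hUU : IntegrableOn F (U ×ˢ U) (μ.prod μ)) (hKUc : IntegrableOn F (K ×ˢ Uᶜ) (μ.prod μ)) :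
    Integrable F (μ.prod μ) := by
  have hUcK : IntegrableOn F (Uᶜ ×ˢ K) (μ.prod μ) := by
    have hF_swap : F ∘ Prod.swap = F := funext fun p => hsymm p.1 p.2
    simpa only [hF_swap] using hKUc.swap
  refine ((hUU.union hKUc).union hUcK).integrable_of_forall_notMem_eq_zero ?_
  rintro ⟨x, y⟩ hxy
  simp only [mem_union, mem_prod, mem_compl_iff, not_or, not_and, not_not] at hxy
  exact hF0 x y (fun hx => by have := hKU hx; tauto) fun hy => by have := hKU hy; tauto

variable {u φ : α → ℝ} {k : α → α → ℝ}

lemma integrableOn_sub_mul_sub_mul_of_energy {U : Set α} (hu : Measurable u)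
    (hφ : Measurable φ) (hk : Measurable fun p : α × α => k p.1 p.2) (hk0 : ∀ x y, 0 ≤ k x y)
    (hU : MeasurableSet U)
    (huU : ∫⁻ x in U, ∫⁻ y in U, ENNReal.ofReal ((u x - u y) ^ 2 * k x y) ∂μ ∂μ < ∞)
    (hφU : ∫⁻ x in U, ∫⁻ y in U, ENNReal.ofReal ((φ x - φ y) ^ 2 * k x y) ∂μ ∂μ < ∞) :
    IntegrableOn (fun p : α × α => (u p.1 - u p.2) * (φ p.1 - φ p.2) * k p.1 p.2) (U ×ˢ U)
      (μ.prod μ) := by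
  have henergy : ∀ v : α → ℝ, Measurable v →
      ∫⁻ x in U, ∫⁻ y in U, ENNReal.ofReal ((v x - v y) ^ 2 * k x y) ∂μ ∂μ < ∞ →
      IntegrableOn (fun p : α × α => (v p.1 - v p.2) ^ 2 * k p.1 p.2) (U ×ˢ U) (μ.prod μ) :=
    fun v hv h => integrableOn_prod_of_setLIntegral_le (by fun_prop)
      (fun p => mul_nonneg (sq_nonneg _) (hk0 _ _)) hU (fun _ _ => le_rfl) h
  refine ((henergy u hu huU).add (henergy φ hφ hφU)).mono' (by fun_prop)
    (Eventually.of_forall fun p => ?_)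
  have hab : |(u p.1 - u p.2) * (φ p.1 - φ p.2)| ≤ (u p.1 - u p.2) ^ 2 + (φ p.1 - φ p.2) ^ 2 := by
    rw [abs_mul, ← sq_abs (u p.1 - u p.2), ← sq_abs (φ p.1 - φ p.2)]
    nlinarith [abs_nonneg (u p.1 - u p.2), abs_nonneg (φ p.1 - φ p.2)]
  rw [Real.norm_eq_abs, abs_mul, abs_of_nonneg (hk0 _ _), Pi.add_apply, ← add_mul]
  exact mul_le_mul_of_nonneg_right hab (hk0 _ _)

lemma integrableOn_sub_mul_sub_mul_of_tail {K V : Set α} {M A B : ℝ} (hu : Measurable u)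
    (hφ : Measurable φ) (hk : Measurable fun p : α × α => k p.1 p.2) (hk0 : ∀ x y, 0 ≤ k x y)
    (hK : MeasurableSet K) (hKfin : μ K < ∞) (huK : IntegrableOn u K μ) (hM : ∀ x, |φ x| ≤ M)
    (hkA : ∀ x ∈ K, ∫⁻ y in V, ENNReal.ofReal (k x y) ∂μ ≤ ENNReal.ofReal A)
    (hkB : ∀ x ∈ K, ∫⁻ y in V, ENNReal.ofReal (|u y| * k x y) ∂μ ≤ ENNReal.ofReal B) :
    IntegrableOn (fun p : α × α => (u p.1 - u p.2) * (φ p.1 - φ p.2) * k p.1 p.2) (K ×ˢ V)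
      (μ.prod μ) := by
  have hfst : IntegrableOn (fun p : α × α => |u p.1| * k p.1 p.2) (K ×ˢ V) (μ.prod μ) := by
    refine integrableOn_prod_of_setLIntegral_le
      (g := fun x => ENNReal.ofReal |u x| * ENNReal.ofReal A) (by fun_prop)
      (fun p => mul_nonneg (abs_nonneg _) (hk0 _ _)) hK (fun x hx => ?_) ?_
    · simp_rw [ENNReal.ofReal_mul (abs_nonneg _)]
      rw [lintegral_const_mul' _ _ ENNReal.ofReal_ne_top]
      exact mul_le_mul_right (hkA x hx) _
    · rw [lintegral_mul_const' _ _ ENNReal.ofReal_ne_top]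
      refine ENNReal.mul_lt_top ?_ ENNReal.ofReal_lt_top
      simpa only [hasFiniteIntegral_def, Real.enorm_eq_ofReal_abs] using huK.2
  have hsnd : IntegrableOn (fun p : α × α => |u p.2| * k p.1 p.2) (K ×ˢ V) (μ.prod μ) := by
    refine integrableOn_prod_of_setLIntegral_le (g := fun _ => ENNReal.ofReal B)
      (by fun_prop) (fun p => mul_nonneg (abs_nonneg _) (hk0 _ _)) hK hkB ?_
    rw [setLIntegral_const]
    exact ENNReal.mul_lt_top ENNReal.ofReal_lt_top hKfin
  refine ((hfst.add hsnd).const_mul (2 * M)).mono' (by fun_prop)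
    (Eventually.of_forall fun p => ?_)
  have hu_sub : |u p.1 - u p.2| ≤ |u p.1| + |u p.2| := abs_sub _ _
  have hφ_sub : |φ p.1 - φ p.2| ≤ 2 * M := (abs_sub _ _).trans (by linarith [hM p.1, hM p.2])
  rw [Real.norm_eq_abs, abs_mul, abs_mul, abs_of_nonneg (hk0 _ _), Pi.add_apply, ← add_mul,
    ← mul_assoc, mul_comm (2 * M)]
  exact mul_le_mul_of_nonneg_right (mul_le_mul hu_sub hφ_sub (abs_nonneg _) (by positivity))
    (hk0 _ _)

end Prod

lemma setLIntegral_lt_top_of_quadForm_lt_top {N : ℕ} {k : Euc N → Euc N → ℝ}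
    {Ω : Set (Euc N)} {u : Euc N → ℝ} (h : quadForm k Ω u < ⊤) :
    ∫⁻ x in Ω, ∫⁻ y in Ω, ENNReal.ofReal ((u x - u y) ^ 2 * k x y) < ∞ :=
  ENNReal.lt_top_of_mul_ne_top_right h.ne (by norm_num)

theorem bForm_well_defined_general
    {N : ℕ} {σ : ℝ} (hσ0 : 0 < σ) (hσ2 : σ ≤ 2)
    (k : Euc N → Euc N → ℝ) (hk : IsKernel N σ k)
    (Ω : Set (Euc N)) (hΩo : IsOpen Ω)
    (u : Euc N → ℝ) (hu : MemVkLoc k Ω u)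
    (φ : Euc N → ℝ) (hφ : IsTestFun Ω φ) :
    Integrable (fun p : Euc N × Euc N => (u p.1 - u p.2) * (φ p.1 - φ p.2) * k p.1 p.2)
      ((volume : Measure (Euc N)).prod volume) := by
  obtain ⟨hkm, hk0, hks, C, hkC⟩ := hk
  obtain ⟨hum, huloc, hutail⟩ := hu
  obtain ⟨hφs, hφc, hφΩ⟩ := hφ
  obtain ⟨U, hUo, hKU, hUΩ, hUc⟩ := exists_open_between_and_isCompact_closure hφc hΩo hφΩ
  obtain ⟨-, huL2, huU⟩ := huloc U hUo hUc hUΩ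
  obtain ⟨δ, hδ, hδU⟩ := hφc.exists_thickening_subset_open hUo hKU
  obtain ⟨B, hB⟩ := hutail δ hδ
  obtain ⟨L, hL⟩ := hφc.exists_abs_sub_le_mul_min_one_norm (hφs.of_le (by norm_cast))
  obtain ⟨M, hM⟩ := hφc.exists_bound_of_continuous hφs.continuous
  have hUfin : volume U < ∞ := (measure_mono subset_closure).trans_lt hUc.measure_lt_top
  have : IsFiniteMeasure (volume.restrict U) := isFiniteMeasure_restrict.2 hUfin.ne
  have hcompl : ∀ x ∈ tsupport φ, Uᶜ ⊆ (ball x δ)ᶜ := fun x hx =>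
    compl_subset_compl.2 ((ball_subset_thickening hx δ).trans hδU)
  refine integrable_prod_of_integrableOn_of_symm (fun x y => ?_) hKU (fun x y hx hy => ?_) ?_ ?_
  · simp only [hks y x]
    ring
  · simp [image_eq_zero_of_notMem_tsupport hx, image_eq_zero_of_notMem_tsupport hy]
  · exact integrableOn_sub_mul_sub_mul_of_energy hum hφs.continuous.measurable hkm hk0
      hUo.measurableSet (setLIntegral_lt_top_of_quadForm_lt_top huU)
      (setLIntegral_setLIntegral_sq_sub_mul_kernel_lt_top hσ0 hσ2 hk0 hkC hL hUfin)
  · exact integrableOn_sub_mul_sub_mul_of_tail hum hφs.continuous.measurable hkm hk0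
      (isClosed_tsupport φ).measurableSet hφc.measure_lt_top
      (IntegrableOn.mono_set (huL2.integrable one_le_two) hKU) hM
      (fun x hx => (lintegral_mono_set (hcompl x hx)).trans
        (setLIntegral_compl_ball_kernel_le hσ0 hδ hk0 hkC x))
      (fun x hx => (lintegral_mono_set (hcompl x hx)).trans (hB x))

/-- `b_k(u,φ)` is well-defined for `u ∈ 𝒱^k_loc(Ω)` and `φ ∈ C_c^∞(Ω)`. -/
theorem bForm_well_defined
    {N : ℕ} (hN : 0 < N) {σ : ℝ} (hσ0 : 0 < σ) (hσ2 : σ ≤ 2)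
    (k : Euc N → Euc N → ℝ) (hk : IsKernel N σ k)
    (Ω : Set (Euc N)) (hΩo : IsOpen Ω)
    (u : Euc N → ℝ) (hu : MemVkLoc k Ω u)
    (φ : Euc N → ℝ) (hφ : IsTestFun Ω φ) :
    Integrable (fun p : Euc N × Euc N => (u p.1 - u p.2) * (φ p.1 - φ p.2) * k p.1 p.2)
      ((volume : Measure (Euc N)).prod volume) :=
  bForm_well_defined_general hσ0 hσ2 k hk Ω hΩo u hu φ hφ
end
end

section
/- Let σ ∈ (0,2], let k be a kernel of order σ, and let Ω ⊆ ℝ^N be open. Let φ : ℝ^N → ℝ be Lipschitz with compact support contained in Ω, and let Ω′ ⊆ Ω be open with the support of φ compactly contained in Ω′. Let u : ℝ^N → ℝ be measurable with u|_{Ω′} ∈ D^k(Ω′). Then the product φu (with u extended arbitrarily outside Ω′; only values on the support of φ matter) belongs to 𝒟^k(Ω), and there is a constant C > 0, depending only on N, k, ‖φ‖_{C^{0,1}} := sup|φ| + Lip(φ), and dist(supp φ, ℝ^N∖Ω′), such that b_k(φu) ≤ C (‖u‖²_{L²(Ω′)} + b_{k,Ω′}(u)). -/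
open MeasureTheory ENNReal Metric Set Filter

noncomputable section

/-! Write `v = φ u`. When both points lie in `Ω'`, `v x - v y = φ x (u x - u y) + u y (φ x - φ y)`;
when one of them lies outside `Ω'`, `φ` vanishes there and only `u (φ x - φ y)` survives. A
bounded Lipschitz `φ` satisfies `(φ x - φ y)² ≲ min 1 |x - y|^σ` because `σ ≤ 2`, so by the kernel
bound `∫ min 1 |x - y|^σ k(x, y) dy ≤ C_k` (and Tonelli with the symmetry of `k`) every term
involving an increment of `φ` integrates to a multiple of `‖u‖²_{L²(Ω')}`, while the remaining
term is at most `2 sup φ² · b_{k,Ω'}(u)`. -/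

lemma sq_mul_sub_mul_le (a b c d : ℝ) :
    (a * b - c * d) ^ 2 ≤ 2 * a ^ 2 * (b - d) ^ 2 + 2 * d ^ 2 * (a - c) ^ 2 := by
  have h : a * b - c * d = a * (b - d) + d * (a - c) := by ring
  rw [h]
  nlinarith [sq_nonneg (a * (b - d) - d * (a - c))]

lemma LipschitzWith.sq_sub_le_mul_min_rpow {E : Type*} [SeminormedAddCommGroup E] {φ : E → ℝ}
    {L : NNReal} (hφ : LipschitzWith L φ) {M : ℝ} (hM : ∀ x, |φ x| ≤ M) {σ : ℝ} (hσ0 : 0 ≤ σ)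
    (hσ2 : σ ≤ 2) (x y : E) :
    (φ x - φ y) ^ 2 ≤ ((L : ℝ) ^ 2 + 4 * M ^ 2) * min 1 (‖x - y‖ ^ σ) := by
  rcases le_or_gt ‖x - y‖ 1 with hxy | hxy
  · have hlip : |φ x - φ y| ≤ L * ‖x - y‖ := by
      simpa [Real.dist_eq, dist_eq_norm] using hφ.dist_le_mul x y
    have hpow : ‖x - y‖ ^ 2 ≤ ‖x - y‖ ^ σ := by
      exact_mod_cast Real.rpow_le_rpow_of_exponent_ge' (norm_nonneg _) hxy hσ0 hσ2
    rw [min_eq_right (Real.rpow_le_one (norm_nonneg _) hxy hσ0)]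
    calc (φ x - φ y) ^ 2 = |φ x - φ y| ^ 2 := (sq_abs _).symm
      _ ≤ (L * ‖x - y‖) ^ 2 := pow_le_pow_left₀ (abs_nonneg _) hlip 2
      _ = L ^ 2 * ‖x - y‖ ^ 2 := mul_pow _ _ _
      _ ≤ L ^ 2 * ‖x - y‖ ^ σ := mul_le_mul_of_nonneg_left hpow (sq_nonneg _)
      _ ≤ _ := mul_le_mul_of_nonneg_right (by nlinarith) (Real.rpow_nonneg (norm_nonneg _) _)
  · rw [min_eq_left (Real.one_le_rpow hxy.le hσ0), mul_one]
    have hx := abs_le.1 (hM x)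
    have hy := abs_le.1 (hM y)
    nlinarith [sq_nonneg (L : ℝ)]

lemma eLpNorm_two_sq_eq_lintegral {α : Type*} [MeasurableSpace α] (μ : Measure α) (f : α → ℝ) :
    eLpNorm f 2 μ ^ 2 = ∫⁻ x, ENNReal.ofReal (f x ^ 2) ∂μ := by
  have h := eLpNorm_nnreal_pow_eq_lintegral (f := f) (μ := μ) (p := 2) two_ne_zero
  simp only [NNReal.coe_ofNat, ENNReal.coe_ofNat] at h
  rw [← ENNReal.rpow_natCast, Nat.cast_ofNat, h]
  refine lintegral_congr fun x => ?_
  rw [← sq_abs, ← Real.norm_eq_abs, ENNReal.ofReal_pow (norm_nonneg _), ofReal_norm,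
    ← ENNReal.rpow_natCast, Nat.cast_ofNat]

section DoubleIntegrals

variable {α : Type*} [MeasurableSpace α] {μ : Measure α}

lemma lintegral_lintegral_add [SFinite μ] {f g : α → α → ℝ≥0∞}
    (hf : Measurable (Function.uncurry f)) :
    ∫⁻ x, ∫⁻ y, (f x y + g x y) ∂μ ∂μ = ∫⁻ x, ∫⁻ y, f x y ∂μ ∂μ + ∫⁻ x, ∫⁻ y, g x y ∂μ ∂μ := by
  rw [← lintegral_add_left (hf.lintegral_prod_right (ν := μ))]
  exact lintegral_congr fun x => lintegral_add_left (hf.comp measurable_prodMk_left) _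

lemma lintegral_lintegral_indicator_indicator {s : Set α} (hs : MeasurableSet s)
    (f : α → α → ℝ≥0∞) :
    ∫⁻ x, ∫⁻ y, s.indicator (fun x => s.indicator (f x) y) x ∂μ ∂μ =
      ∫⁻ x in s, ∫⁻ y in s, f x y ∂μ ∂μ := by
  have h : ∀ x, ∫⁻ y, s.indicator (fun x => s.indicator (f x) y) x ∂μ =
      s.indicator (fun x => ∫⁻ y in s, f x y ∂μ) x := by
    intro x
    by_cases hx : x ∈ s <;> simp [hx, lintegral_indicator hs]
  simp_rw [h, lintegral_indicator hs]

lemma lintegral_lintegral_add_mul_le [SFinite μ] {U : α → ℝ≥0∞} {W : α → α → ℝ≥0∞} {C : ℝ≥0∞}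
    (hU : Measurable U) (hW : Measurable (Function.uncurry W)) (hWsymm : ∀ x y, W x y = W y x)
    (hWC : ∀ x, ∫⁻ y, W x y ∂μ ≤ C) :
    ∫⁻ x, ∫⁻ y, (U x + U y) * W x y ∂μ ∂μ ≤ 2 * C * ∫⁻ x, U x ∂μ := by
  have hUW : Measurable (Function.uncurry fun x y => U x * W x y) :=
    (hU.comp measurable_fst).mul hW
  have hleft : ∫⁻ x, ∫⁻ y, U x * W x y ∂μ ∂μ ≤ C * ∫⁻ x, U x ∂μ := by
    calc ∫⁻ x, ∫⁻ y, U x * W x y ∂μ ∂μ = ∫⁻ x, U x * ∫⁻ y, W x y ∂μ ∂μ := by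
          exact lintegral_congr fun x => lintegral_const_mul _ (hW.comp measurable_prodMk_left)
      _ ≤ ∫⁻ x, U x * C ∂μ := lintegral_mono fun x => by gcongr; exact hWC x
      _ = C * ∫⁻ x, U x ∂μ := by rw [lintegral_mul_const _ hU, mul_comm]
  have hright : ∫⁻ x, ∫⁻ y, U y * W x y ∂μ ∂μ = ∫⁻ x, ∫⁻ y, U x * W x y ∂μ ∂μ := by
    rw [lintegral_lintegral_swap ((hU.comp measurable_snd).mul hW).aemeasurable]
    simp_rw [hWsymm]
  calc ∫⁻ x, ∫⁻ y, (U x + U y) * W x y ∂μ ∂μ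
      = ∫⁻ x, ∫⁻ y, U x * W x y ∂μ ∂μ + ∫⁻ x, ∫⁻ y, U y * W x y ∂μ ∂μ := by
        simp_rw [add_mul]
        exact lintegral_lintegral_add hUW
    _ ≤ 2 * C * ∫⁻ x, U x ∂μ := by
        rw [hright, two_mul, add_mul]
        exact add_le_add hleft hleft

end DoubleIntegrals

lemma ofReal_mul_sub_mul_sq_le {α : Type*} {s : Set α} {φ u : α → ℝ} {k K : α → α → ℝ}
    {M B : ℝ} (hφs : ∀ x ∉ s, φ x = 0) (hM : ∀ x, |φ x| ≤ M) (hk : ∀ x y, 0 ≤ k x y)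
    (hB0 : 0 ≤ B) (hB : ∀ x y, (φ x - φ y) ^ 2 * k x y ≤ B * K x y) (x y : α) :
    ENNReal.ofReal ((φ x * u x - φ y * u y) ^ 2 * k x y) ≤
      s.indicator (fun x => s.indicator
          (fun y => ENNReal.ofReal (2 * M ^ 2) * ENNReal.ofReal ((u x - u y) ^ 2 * k x y)) y) x +
        ENNReal.ofReal (2 * B) * ((s.indicator (fun x => ENNReal.ofReal (u x ^ 2)) x +
          s.indicator (fun x => ENNReal.ofReal (u x ^ 2)) y) * ENNReal.ofReal (K x y)) := by
  have hBK : 0 ≤ B * K x y := (mul_nonneg (sq_nonneg _) (hk x y)).trans (hB x y)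
  have hcross : ∀ z, (φ x * u x - φ y * u y) ^ 2 = (φ x - φ y) ^ 2 * u z ^ 2 →
      ENNReal.ofReal ((φ x * u x - φ y * u y) ^ 2 * k x y) ≤
        ENNReal.ofReal (2 * B) * (ENNReal.ofReal (u z ^ 2) * ENNReal.ofReal (K x y)) := by
    intro z hz
    rw [← ENNReal.ofReal_mul (sq_nonneg _), ← ENNReal.ofReal_mul (by positivity)]
    refine ENNReal.ofReal_le_ofReal ?_
    calc (φ x * u x - φ y * u y) ^ 2 * k x y = u z ^ 2 * ((φ x - φ y) ^ 2 * k x y) := by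
          rw [hz]; ring
      _ ≤ u z ^ 2 * (B * K x y) := mul_le_mul_of_nonneg_left (hB x y) (sq_nonneg _)
      _ ≤ 2 * B * (u z ^ 2 * K x y) := by nlinarith [sq_nonneg (u z)]
  by_cases hx : x ∈ s <;> by_cases hy : y ∈ s
  · have hφx : φ x ^ 2 ≤ M ^ 2 := sq_le_sq' (abs_le.1 (hM x)).1 (abs_le.1 (hM x)).2
    have hA : 0 ≤ (u x - u y) ^ 2 * k x y := mul_nonneg (sq_nonneg _) (hk x y)
    have hreal : (φ x * u x - φ y * u y) ^ 2 * k x y ≤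
        2 * M ^ 2 * ((u x - u y) ^ 2 * k x y) + 2 * B * (u y ^ 2 * K x y) := by
      calc (φ x * u x - φ y * u y) ^ 2 * k x y
          ≤ (2 * φ x ^ 2 * (u x - u y) ^ 2 + 2 * u y ^ 2 * (φ x - φ y) ^ 2) * k x y :=
            mul_le_mul_of_nonneg_right (sq_mul_sub_mul_le _ _ _ _) (hk x y)
        _ = 2 * φ x ^ 2 * ((u x - u y) ^ 2 * k x y) + 2 * u y ^ 2 * ((φ x - φ y) ^ 2 * k x y) := by
            ring
        _ ≤ 2 * M ^ 2 * ((u x - u y) ^ 2 * k x y) + 2 * u y ^ 2 * (B * K x y) := by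
            gcongr ?_ + 2 * u y ^ 2 * ?_
            · exact mul_le_mul_of_nonneg_right (by linarith) hA
            · exact hB x y
        _ = 2 * M ^ 2 * ((u x - u y) ^ 2 * k x y) + 2 * B * (u y ^ 2 * K x y) := by ring
    simp only [Set.indicator_of_mem hx, Set.indicator_of_mem hy]
    calc ENNReal.ofReal ((φ x * u x - φ y * u y) ^ 2 * k x y)
        ≤ ENNReal.ofReal (2 * M ^ 2 * ((u x - u y) ^ 2 * k x y)) +
            ENNReal.ofReal (2 * B * (u y ^ 2 * K x y)) :=
          (ENNReal.ofReal_le_ofReal hreal).trans ENNReal.ofReal_add_le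
      _ = ENNReal.ofReal (2 * M ^ 2) * ENNReal.ofReal ((u x - u y) ^ 2 * k x y) +
            ENNReal.ofReal (2 * B) * (ENNReal.ofReal (u y ^ 2) * ENNReal.ofReal (K x y)) := by
          rw [ENNReal.ofReal_mul (p := 2 * M ^ 2) (by positivity),
            ENNReal.ofReal_mul (p := 2 * B) (by positivity),
            ENNReal.ofReal_mul (p := u y ^ 2) (sq_nonneg _)]
      _ ≤ _ := by gcongr; exact le_add_self
  · simpa [hx, hy] using hcross x (by rw [hφs y hy]; ring)
  · simpa [hx, hy] using hcross y (by rw [hφs x hx]; ring)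
  · simp [hφs x hx, hφs y hy]

lemma two_mul_quadForm {N : ℕ} (k : Euc N → Euc N → ℝ) (Ω : Set (Euc N)) (u : Euc N → ℝ) :
    2 * quadForm k Ω u = ∫⁻ x in Ω, ∫⁻ y in Ω, ENNReal.ofReal ((u x - u y) ^ 2 * k x y) := by
  rw [quadForm, ← mul_assoc, one_div, ENNReal.mul_inv_cancel two_ne_zero ofNat_ne_top, one_mul]

lemma quadForm_mul_le {N : ℕ} {σ : ℝ} (hσ0 : 0 ≤ σ) (hσ2 : σ ≤ 2) {k : Euc N → Euc N → ℝ}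
    (hkm : Measurable (fun p : Euc N × Euc N => k p.1 p.2)) (hk0 : ∀ x y, 0 ≤ k x y)
    (hks : ∀ x y, k x y = k y x) {Ck : ℝ}
    (hCk : ∀ x, ∫⁻ y, ENNReal.ofReal (min 1 (‖x - y‖ ^ σ) * k x y) ≤ ENNReal.ofReal Ck)
    {s : Set (Euc N)} (hs : MeasurableSet s) {φ u : Euc N → ℝ} {L : NNReal} {M : ℝ}
    (hφ : LipschitzWith L φ) (hM : ∀ x, |φ x| ≤ M) (hφs : ∀ x ∉ s, φ x = 0)
    (hu : Measurable u) :
    quadForm k univ (fun x => φ x * u x) ≤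
      ENNReal.ofReal (2 * M ^ 2) * quadForm k s u +
        ENNReal.ofReal (2 * ((L : ℝ) ^ 2 + 4 * M ^ 2)) * ENNReal.ofReal Ck *
          ∫⁻ x in s, ENNReal.ofReal (u x ^ 2) := by
  set B : ℝ := (L : ℝ) ^ 2 + 4 * M ^ 2
  set W : Euc N → Euc N → ℝ≥0∞ := fun x y => ENNReal.ofReal (min 1 (‖x - y‖ ^ σ) * k x y)
  set U : Euc N → ℝ≥0∞ := s.indicator fun x => ENNReal.ofReal (u x ^ 2)
  have hW : Measurable (Function.uncurry W) := by
    refine ENNReal.measurable_ofReal.comp (Measurable.mul ?_ hkm)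
    fun_prop
  have hU : Measurable U := (ENNReal.measurable_ofReal.comp (hu.pow_const 2)).indicator hs
  have hWsymm : ∀ x y, W x y = W y x := fun x y => by
    simp only [W]; rw [hks, norm_sub_rev]
  have hpointwise := ofReal_mul_sub_mul_sq_le (u := u) (B := B)
    (K := fun x y => min 1 (‖x - y‖ ^ σ) * k x y) hφs hM hk0 (by positivity) fun x y => by
      rw [← mul_assoc]
      exact mul_le_mul_of_nonneg_right (hφ.sq_sub_le_mul_min_rpow hM hσ0 hσ2 x y) (hk0 x y)
  have hbound : 2 * quadForm k univ (fun x => φ x * u x) ≤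
      ENNReal.ofReal (2 * M ^ 2) * (2 * quadForm k s u) +
        ENNReal.ofReal (2 * B) * (2 * ENNReal.ofReal Ck * ∫⁻ x, U x) := by
    rw [two_mul_quadForm, two_mul_quadForm, Measure.restrict_univ]
    calc _ ≤ ∫⁻ x, ∫⁻ y, (ENNReal.ofReal (2 * B) * ((U x + U y) * W x y) +
            s.indicator (fun x => s.indicator (fun y => ENNReal.ofReal (2 * M ^ 2) *
              ENNReal.ofReal ((u x - u y) ^ 2 * k x y)) y) x) :=
          lintegral_mono fun x => lintegral_mono fun y => (hpointwise x y).trans_eq (add_comm _ _)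
      _ = ENNReal.ofReal (2 * B) * (∫⁻ x, ∫⁻ y, (U x + U y) * W x y) +
            ENNReal.ofReal (2 * M ^ 2) *
              ∫⁻ x in s, ∫⁻ y in s, ENNReal.ofReal ((u x - u y) ^ 2 * k x y) := by
          rw [lintegral_lintegral_add (by fun_prop), lintegral_lintegral_indicator_indicator hs]
          simp only [lintegral_const_mul' _ _ ENNReal.ofReal_ne_top]
      _ ≤ _ := by
          rw [add_comm]
          gcongr
          exact lintegral_lintegral_add_mul_le hU hW hWsymm hCk
  rw [lintegral_indicator hs] at hbound
  refine (ENNReal.mul_le_mul_iff_right two_ne_zero ofNat_ne_top).1 (hbound.trans_eq ?_)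
  ring

lemma memLp_mul_of_memLp_restrict {α : Type*} [MeasurableSpace α] {μ : Measure α} {p : ℝ≥0∞}
    {s : Set α} (hs : MeasurableSet s) {φ u : α → ℝ} {M : ℝ} (hM : ∀ x, |φ x| ≤ M)
    (hφs : ∀ x ∉ s, φ x = 0) (hu : MemLp u p (μ.restrict s))
    (hm : AEStronglyMeasurable (fun x => φ x * u x) μ) :
    MemLp (fun x => φ x * u x) p μ := by
  refine (((memLp_indicator_iff_restrict hs).2 hu).const_mul M).of_le hm (ae_of_all _ fun x => ?_)
  by_cases hx : x ∈ s
  · simp only [Set.indicator_of_mem hx, norm_mul, Real.norm_eq_abs]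
    exact mul_le_mul_of_nonneg_right ((hM x).trans (le_abs_self M)) (abs_nonneg _)
  · simp [hφs x hx, hx]

theorem cutoff_product_estimate_general
    {N : ℕ} {σ : ℝ} (hσ0 : 0 < σ) (hσ2 : σ ≤ 2)
    (k : Euc N → Euc N → ℝ) (hk : IsKernel N σ k)
    (Ω : Set (Euc N))
    (φ : Euc N → ℝ) (L : NNReal) (hφlip : LipschitzWith L φ) (hφc : HasCompactSupport φ)
    (Ω' : Set (Euc N)) (hΩ'o : IsOpen Ω') (hΩ'Ω : Ω' ⊆ Ω) (hsupp : tsupport φ ⊆ Ω') :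
    ∃ C > (0:ℝ), ∀ u : Euc N → ℝ,
      Measurable u → MemLp u 2 (volume.restrict Ω') → quadForm k Ω' u < ⊤ →
      (MemDkZero k Ω (fun x => φ x * u x) ∧
        quadForm k Set.univ (fun x => φ x * u x) ≤
          ENNReal.ofReal C * ((eLpNorm u 2 (volume.restrict Ω')) ^ 2 + quadForm k Ω' u)) := by
  obtain ⟨hkm, hk0, hks, Ck, hCk⟩ := hk
  obtain ⟨M, hM⟩ := hφc.exists_bound_of_continuous hφlip.continuous
  simp only [Real.norm_eq_abs] at hM
  have hφs : ∀ x ∉ Ω', φ x = 0 := fun x hx => image_eq_zero_of_notMem_tsupport (hx <| hsupp ·)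
  set b : ℝ := 2 * ((L : ℝ) ^ 2 + 4 * M ^ 2)
  set C := max (2 * M ^ 2) (b * Ck) + 1
  have hC₁ : ENNReal.ofReal (2 * M ^ 2) ≤ ENNReal.ofReal C :=
    ENNReal.ofReal_le_ofReal (by linarith [le_max_left (2 * M ^ 2) (b * Ck)])
  have hC₂ : ENNReal.ofReal b * ENNReal.ofReal Ck ≤ ENNReal.ofReal C := by
    rw [← ENNReal.ofReal_mul (by positivity)]
    exact ENNReal.ofReal_le_ofReal (by linarith [le_max_right (2 * M ^ 2) (b * Ck)])
  refine ⟨C, by positivity, fun u hu hu2 hub => ?_⟩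
  have hest : quadForm k univ (fun x => φ x * u x) ≤
      ENNReal.ofReal C * (eLpNorm u 2 (volume.restrict Ω') ^ 2 + quadForm k Ω' u) := by
    calc _ ≤ _ := quadForm_mul_le hσ0.le hσ2 hkm hk0 hks hCk hΩ'o.measurableSet hφlip hM hφs hu
      _ ≤ ENNReal.ofReal C * quadForm k Ω' u +
          ENNReal.ofReal C * eLpNorm u 2 (volume.restrict Ω') ^ 2 := by
        rw [eLpNorm_two_sq_eq_lintegral]
        gcongr
      _ = _ := by rw [mul_add, add_comm]
  have hvm : Measurable fun x => φ x * u x := hφlip.continuous.measurable.mul hu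
  refine ⟨⟨hvm, memLp_mul_of_memLp_restrict hΩ'o.measurableSet hM hφs hu2 hvm.aestronglyMeasurable,
    hest.trans_lt (ENNReal.mul_lt_top ofReal_lt_top (ENNReal.add_lt_top.2
      ⟨ENNReal.pow_lt_top hu2.2, hub⟩)),
    ae_of_all _ fun x hx => by simp [hφs x (hx <| hΩ'Ω ·)]⟩, hest⟩

/-- products with Lipschitz cutoff functions (Lemma `properties1`(5)). -/
theorem cutoff_product_estimate
    {N : ℕ} (hN : 0 < N) {σ : ℝ} (hσ0 : 0 < σ) (hσ2 : σ ≤ 2)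
    (k : Euc N → Euc N → ℝ) (hk : IsKernel N σ k)
    (Ω : Set (Euc N)) (hΩo : IsOpen Ω)
    (φ : Euc N → ℝ) (L : NNReal) (hφlip : LipschitzWith L φ) (hφc : HasCompactSupport φ)
    (Ω' : Set (Euc N)) (hΩ'o : IsOpen Ω') (hΩ'Ω : Ω' ⊆ Ω) (hsupp : tsupport φ ⊆ Ω') :
    ∃ C > (0:ℝ), ∀ u : Euc N → ℝ,
      Measurable u → MemLp u 2 (volume.restrict Ω') → quadForm k Ω' u < ⊤ →
      (MemDkZero k Ω (fun x => φ x * u x) ∧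
        quadForm k Set.univ (fun x => φ x * u x) ≤
          ENNReal.ofReal C * ((eLpNorm u 2 (volume.restrict Ω')) ^ 2 + quadForm k Ω' u)) :=
  cutoff_product_estimate_general hσ0 hσ2 k hk Ω φ L hφlip hφc Ω' hΩ'o hΩ'Ω hsupp
end
end
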